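/- Let R be a complete regular local ring with fixed regular system of parameters s₁,…,s_d, and let R⟨X₁,…,X_l⟩ be the 𝔪_R-adic completion of R[X]. Define the leading term LT_R(f) = s^{v_R(f)} X^{deg_R(f)} via iterated divisor valuations along s₁,…,s_d and a fixed monomial order on X^ℕ. Then LT_R is multiplicative: LT_R(fg) = LT_R(f)·LT_R(g) for all f, g ∈ R⟨X⟩. -/

import Mathlib

set_option synthInstance.maxHeartbeats 1000000
set_option maxHeartbeats 1000000

noncomputable section

/-! Gröbner-basis machinery over a complete regular local ring `R` with fixed regular system
of parameters `s₁, …, s_d`, for the ring `R⟨X₁,…,X_l⟩` of strictly convergent power series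
(realized inside `R[[X₁,…,X_l]]` as the series whose coefficients tend to `0`
`𝔪_R`-adically). -/

/-- Strict (lexicographic) order on exponent tuples `ℕ^d`. -/
def lexLT {d : ℕ} (k a : Fin d → ℕ) : Prop :=
  ∃ i : Fin d, k i < a i ∧ ∀ j : Fin d, j < i → k j = a j

/-- The ideal of `R` generated by the monomials `s₁^{a₁} ⋯ s_d^{a_d}` in the regular system
of parameters with exponent tuple `a` lexicographically `≥ k`.  For `f ≠ 0`, membership
`f ∈ lexIdeal s k` is equivalent to `v_R(f) ≥_lex k`, where `v_R` is the iterated divisorial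
valuation along `s₁, …, s_d`. -/
def lexIdeal {R : Type*} [CommRing R] {d : ℕ} (s : Fin d → R) (k : Fin d → ℕ) : Ideal R :=
  Ideal.span {x : R | ∃ a : Fin d → ℕ, (k = a ∨ lexLT k a) ∧ x = ∏ i, s i ^ a i}

/-- `v_R(c) ≥_lex k`. -/
def Vge {R : Type*} [CommRing R] {d : ℕ} (s : Fin d → R) (c : R) (k : Fin d → ℕ) : Prop :=
  c ∈ lexIdeal s k

/-- `v_R(c) = k` (the iterated divisorial valuation of `c` is exactly `k`). -/
def IsVval {R : Type*} [CommRing R] {d : ℕ} (s : Fin d → R) (c : R) (k : Fin d → ℕ) :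
    Prop :=
  Vge s c k ∧ ∀ k' : Fin d → ℕ, lexLT k k' → ¬ Vge s c k'

/-- `LT_R(f) = s^k · X^m` : the leading term of `f ∈ R⟨X⟩` with respect to the iterated
divisorial valuations along `s` and the monomial order `mole` is the term `s^k X^m`, i.e.
`v_R(f) = k` (all coefficients have `v_R ≥_lex k`, the coefficient of `X^m` has `v_R = k`)
and `m` is the `mole`-least monomial whose coefficient achieves this value. -/
def IsLT {R : Type*} [CommRing R] {d l : ℕ} (s : Fin d → R)
    (mole : (Fin l →₀ ℕ) → (Fin l →₀ ℕ) → Prop)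
    (f : MvPowerSeries (Fin l) R) (k : Fin d → ℕ) (m : Fin l →₀ ℕ) : Prop :=
  (∀ m' : Fin l →₀ ℕ, Vge s (MvPowerSeries.coeff m' f) k) ∧
  IsVval s (MvPowerSeries.coeff m f) k ∧
  (∀ m' : Fin l →₀ ℕ, m' ≠ m → mole m' m → ¬ IsVval s (MvPowerSeries.coeff m' f) k)

/-- The monomial `s^k X^m` as an element of `R[[X]]`. -/
def ltElem {R : Type*} [CommRing R] {d l : ℕ} (s : Fin d → R)
    (k : Fin d → ℕ) (m : Fin l →₀ ℕ) : MvPowerSeries (Fin l) R :=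
  MvPowerSeries.monomial m (∏ i, s i ^ k i)

/-- The order `⪰` on terms: `s^k X^m ⪰ s^{k'} X^{m'}` iff `k <_lex k'`, or `k = k'` and
`m' ⪯ m` in the monomial order. -/
def TermGE {d l : ℕ} (mole : (Fin l →₀ ℕ) → (Fin l →₀ ℕ) → Prop)
    (k : Fin d → ℕ) (m : Fin l →₀ ℕ) (k' : Fin d → ℕ) (m' : Fin l →₀ ℕ) : Prop :=
  lexLT k k' ∨ (k = k' ∧ mole m' m)

/-- Membership in `R⟨X⟩ ⊆ R[[X]]`: the coefficients tend to `0` `𝔪`-adically. -/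
def Decay {R : Type*} [CommRing R] (𝔪 : Ideal R) {l : ℕ}
    (f : MvPowerSeries (Fin l) R) : Prop :=
  ∀ k : ℕ, {m : Fin l →₀ ℕ | MvPowerSeries.coeff m f ∉ 𝔪 ^ k}.Finite

/-- `mole` is a monomial order: a linear order on monomials, compatible with multiplication,
whose strict version is well-founded (a well-order). -/
def IsMonomialOrder {l : ℕ} (mole : (Fin l →₀ ℕ) → (Fin l →₀ ℕ) → Prop) : Prop :=
  IsLinearOrder (Fin l →₀ ℕ) mole ∧
  (∀ a b c : Fin l →₀ ℕ, mole a b → mole (a + c) (b + c)) ∧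
  WellFounded (fun a b : Fin l →₀ ℕ => mole a b ∧ a ≠ b)

/-- `s` is a regular system of parameters of the local ring `R`: it generates the maximal
ideal and forms a regular sequence. -/
def IsRegularSystem {R : Type*} [CommRing R] [IsLocalRing R] {d : ℕ} (s : Fin d → R) :
    Prop :=
  Ideal.span (Set.range s) = IsLocalRing.maximalIdeal R ∧
  ∀ i : Fin d, ∀ x : R,
    s i * x ∈ Ideal.span {y : R | ∃ j : Fin d, j < i ∧ y = s j} →
    x ∈ Ideal.span {y : R | ∃ j : Fin d, j < i ∧ y = s j}

end

namespace LexAux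


variable {d : ℕ}

theorem lexLT_irrefl (a : Fin d → ℕ) : ¬ lexLT a a := by
  rintro ⟨i, hi, -⟩; exact lt_irrefl _ hi

theorem lexLT_trans {a b c : Fin d → ℕ} (h1 : lexLT a b) (h2 : lexLT b c) : lexLT a c := by
  obtain ⟨i, hi, hj⟩ := h1
  obtain ⟨i', hi', hj'⟩ := h2
  rcases lt_trichotomy i i' with h | h | h
  · exact ⟨i, lt_of_lt_of_le hi (hj' i h).le, fun j hji => (hj j hji).trans (hj' j (hji.trans h))⟩
  · subst h; exact ⟨i, hi.trans hi', fun j hji => (hj j hji).trans (hj' j hji)⟩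
  · exact ⟨i', by rw [hj i' h]; exact hi', fun j hji => (hj j (hji.trans h)).trans (hj' j hji)⟩

theorem lexLT_trichotomy (a b : Fin d → ℕ) : lexLT a b ∨ a = b ∨ lexLT b a := by
  by_cases hab : a = b
  · exact Or.inr (Or.inl hab)
  · classical
    have hne : (Finset.univ.filter (fun i => a i ≠ b i)).Nonempty := by
      by_contra h
      rw [Finset.not_nonempty_iff_eq_empty, Finset.filter_eq_empty_iff] at h
      exact hab (funext fun i => not_not.1 (h (Finset.mem_univ i)))
    obtain ⟨i, hi, hmin⟩ := Finset.exists_min_image _ id hne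
    simp only [Finset.mem_filter, Finset.mem_univ, true_and] at hi hmin
    have heq : ∀ j, j < i → a j = b j := by
      intro j hj
      by_contra hne'
      exact absurd (hmin j hne') (not_le.2 hj)
    rcases lt_or_gt_of_ne (hi : a i ≠ b i) with h | h
    · exact Or.inl ⟨i, h, heq⟩
    · exact Or.inr (Or.inr ⟨i, h, fun j hj => (heq j hj).symm⟩)

theorem lexLT_add_right {a b : Fin d → ℕ} (c : Fin d → ℕ) (h : lexLT a b) :
    lexLT (a + c) (b + c) := by
  obtain ⟨i, hi, hj⟩ := h
  exact ⟨i, by simpa using hi, fun j hji => by simp [hj j hji]⟩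

/-- `a ⪯ b` in lex. -/
def LE' (a b : Fin d → ℕ) : Prop := a = b ∨ lexLT a b

theorem LE'.trans {a b c : Fin d → ℕ} (h1 : LE' a b) (h2 : LE' b c) : LE' a c := by
  rcases h1 with rfl | h1
  · exact h2
  rcases h2 with rfl | h2
  · exact Or.inr h1
  · exact Or.inr (lexLT_trans h1 h2)

theorem LE'.add {a b a' b' : Fin d → ℕ} (h1 : LE' a b) (h2 : LE' a' b') :
    LE' (a + a') (b + b') := by
  rcases h1 with rfl | h1
  · rcases h2 with rfl | h2
    · exact Or.inl rfl
    · exact Or.inr (by simpa [add_comm] using lexLT_add_right a h2)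
  · rcases h2 with rfl | h2
    · exact Or.inr (lexLT_add_right a' h1)
    · exact Or.inr (lexLT_trans (lexLT_add_right a' h1) (by simpa [add_comm] using lexLT_add_right b h2))

theorem lt_of_le_of_lt' {a b c : Fin d → ℕ} (h1 : lexLT a b) (h2 : LE' b c) : lexLT a c := by
  rcases h2 with rfl | h2
  · exact h1
  · exact lexLT_trans h1 h2

theorem lexLT_succ (hd : 0 < d) (k : Fin d → ℕ) : lexLT k (k + 1) :=
  ⟨⟨0, hd⟩, by simp, fun j hj => (Nat.not_lt_zero _ (Fin.lt_def.1 hj)).elim⟩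


end LexAux

namespace LexAux

variable {R : Type*} [CommRing R] {d : ℕ} (s : Fin d → R)

theorem prod_mem_lexIdeal {k a : Fin d → ℕ} (h : LE' k a) :
    (∏ i, s i ^ a i) ∈ lexIdeal s k :=
  Ideal.subset_span ⟨a, h, rfl⟩

theorem lexIdeal_mono {k k' : Fin d → ℕ} (h : LE' k k') : lexIdeal s k' ≤ lexIdeal s k := by
  rw [lexIdeal, Ideal.span_le]
  rintro x ⟨a, ha, rfl⟩
  exact prod_mem_lexIdeal s (h.trans ha)

/-- Ideal of monomials with exponent strictly lex-greater than `k`. -/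
def SIdeal (k : Fin d → ℕ) : Ideal R :=
  Ideal.span {x : R | ∃ a : Fin d → ℕ, lexLT k a ∧ x = ∏ i, s i ^ a i}

theorem SIdeal_le_lexIdeal (k : Fin d → ℕ) : SIdeal s k ≤ lexIdeal s k := by
  rw [SIdeal, Ideal.span_le]
  rintro x ⟨a, ha, rfl⟩
  exact prod_mem_lexIdeal s (Or.inr ha)

theorem lexIdeal_le_SIdeal {k k' : Fin d → ℕ} (h : lexLT k k') :
    lexIdeal s k' ≤ SIdeal s k := by
  rw [lexIdeal, Ideal.span_le]
  rintro x ⟨a, ha, rfl⟩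
  exact Ideal.subset_span ⟨a, lt_of_le_of_lt' h ha, rfl⟩

theorem mul_mem_lexIdeal {a b : R} {ka kb : Fin d → ℕ}
    (ha : a ∈ lexIdeal s ka) (hb : b ∈ lexIdeal s kb) : a * b ∈ lexIdeal s (ka + kb) := by
  have := Ideal.mul_mem_mul ha hb
  rw [lexIdeal, lexIdeal, Ideal.span_mul_span] at this
  refine Ideal.span_le.2 ?_ this
  rintro x hx
  simp only [Set.mem_mul] at hx
  obtain ⟨u, ⟨α, hα, rfl⟩, v, ⟨β, hβ, rfl⟩, hx⟩ := hx
  rcases hx with rfl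
  have : (∏ i, s i ^ α i) * ∏ i, s i ^ β i = ∏ i, s i ^ (α + β) i := by
    rw [← Finset.prod_mul_distrib]
    exact Finset.prod_congr rfl fun i _ => by rw [Pi.add_apply, pow_add]
  rw [this]
  exact prod_mem_lexIdeal s (LE'.add hα hβ)

theorem mul_mem_SIdeal {a b : R} {ka kb : Fin d → ℕ}
    (ha : a ∈ SIdeal s ka) (hb : b ∈ lexIdeal s kb) : a * b ∈ SIdeal s (ka + kb) := by
  have := Ideal.mul_mem_mul ha hb
  rw [SIdeal, lexIdeal, Ideal.span_mul_span] at this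
  refine Ideal.span_le.2 ?_ this
  rintro x hx
  simp only [Set.mem_mul] at hx
  obtain ⟨u, ⟨α, hα, rfl⟩, v, ⟨β, hβ, rfl⟩, hx⟩ := hx
  rcases hx with rfl
  have : (∏ i, s i ^ α i) * ∏ i, s i ^ β i = ∏ i, s i ^ (α + β) i := by
    rw [← Finset.prod_mul_distrib]
    exact Finset.prod_congr rfl fun i _ => by rw [Pi.add_apply, pow_add]
  rw [this]
  refine Ideal.subset_span ⟨α + β, ?_, rfl⟩
  rcases hβ with rfl | hβ
  · exact lexLT_add_right kb hα
  · exact lexLT_trans (lexLT_add_right kb hα) (by simpa [add_comm] using lexLT_add_right α hβ)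

theorem mem_SIdeal_exists (hd : 0 < d) {c : R} {k : Fin d → ℕ} (hc : c ∈ SIdeal s k) :
    ∃ k', lexLT k k' ∧ c ∈ lexIdeal s k' := by
  refine Submodule.span_induction ?_ ?_ ?_ ?_ hc
  · rintro x ⟨a, ha, rfl⟩
    exact ⟨a, ha, prod_mem_lexIdeal s (Or.inl rfl)⟩
  · exact ⟨k + 1, lexLT_succ hd k, zero_mem _⟩
  · rintro x y - - ⟨k1, hk1, hx⟩ ⟨k2, hk2, hy⟩
    rcases lexLT_trichotomy k1 k2 with h | h | h
    · exact ⟨k1, hk1, add_mem hx (lexIdeal_mono s (Or.inr h) hy)⟩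
    · subst h; exact ⟨k1, hk1, add_mem hx hy⟩
    · exact ⟨k2, hk2, add_mem (lexIdeal_mono s (Or.inr h) hx) hy⟩
  · rintro r x - ⟨k1, hk1, hx⟩
    exact ⟨k1, hk1, Ideal.mul_mem_left _ r hx⟩

theorem isVval_iff (hd : 0 < d) {c : R} {k : Fin d → ℕ} :
    IsVval s c k ↔ c ∈ lexIdeal s k ∧ c ∉ SIdeal s k := by
  constructor
  · rintro ⟨h1, h2⟩
    refine ⟨h1, fun hc => ?_⟩
    obtain ⟨k', hk', hck'⟩ := mem_SIdeal_exists s hd hc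
    exact h2 k' hk' hck'
  · rintro ⟨h1, h2⟩
    exact ⟨h1, fun k' hk' hck' => h2 (lexIdeal_le_SIdeal s hk' hck')⟩

theorem isVval_add (hd : 0 < d) {a b : R} {k : Fin d → ℕ}
    (ha : IsVval s a k) (hb : b ∈ SIdeal s k) : IsVval s (a + b) k := by
  rw [isVval_iff s hd] at ha ⊢
  refine ⟨add_mem ha.1 (SIdeal_le_lexIdeal s k hb), fun h => ha.2 ?_⟩
  simpa using sub_mem h hb

theorem not_isVval_zero (hd : 0 < d) (k : Fin d → ℕ) : ¬ IsVval s (0 : R) k := by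
  rintro ⟨-, h⟩
  exact h (k + 1) (lexLT_succ hd k) (zero_mem _)

end LexAux

namespace LexAux

section Quot

variable {R : Type*} [CommRing R] {d' : ℕ}

/-- head/tail analysis of `lexLT` on `Fin (d'+1)`. -/
theorem lexLT_head_or_tail {k k' : Fin (d' + 1) → ℕ} (h : lexLT k k') :
    k 0 < k' 0 ∨ (k 0 = k' 0 ∧ lexLT (Fin.tail k) (Fin.tail k')) := by
  obtain ⟨i, hi, hj⟩ := h
  rcases Fin.eq_zero_or_eq_succ i with rfl | ⟨i', rfl⟩
  · exact Or.inl hi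
  · refine Or.inr ⟨hj 0 i'.succ_pos, ⟨i', hi, fun j hj' => hj j.succ (Fin.succ_lt_succ_iff.2 hj')⟩⟩

theorem lexLT_of_tail {k : Fin (d' + 1) → ℕ} {k'' : Fin d' → ℕ}
    (h : lexLT (Fin.tail k) k'') : lexLT k (Fin.cons (k 0) k'') := by
  obtain ⟨i, hi, hj⟩ := h
  refine ⟨i.succ, by simpa [Fin.tail] using hi, fun j hj' => ?_⟩
  rcases Fin.eq_zero_or_eq_succ j with rfl | ⟨j', rfl⟩
  · simp
  · simpa [Fin.tail] using hj j' (Fin.succ_lt_succ_iff.1 hj')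

theorem head_le_of_LE' {k a : Fin (d' + 1) → ℕ} (h : LE' k a) : k 0 ≤ a 0 := by
  rcases h with rfl | ⟨i, hi, hj⟩
  · exact le_rfl
  · rcases Fin.eq_zero_or_eq_succ i with rfl | ⟨i', rfl⟩
    · exact hi.le
    · exact (hj 0 i'.succ_pos).le

theorem LE'_tail {k a : Fin (d' + 1) → ℕ} (h : LE' k a) (h0 : a 0 = k 0) :
    LE' (Fin.tail k) (Fin.tail a) := by
  rcases h with rfl | ⟨i, hi, hj⟩
  · exact Or.inl rfl
  · rcases Fin.eq_zero_or_eq_succ i with rfl | ⟨i', rfl⟩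
    · omega
    · exact Or.inr ⟨i', by simpa [Fin.tail] using hi,
        fun j hj' => by simpa [Fin.tail] using hj j.succ (Fin.succ_lt_succ_iff.2 hj')⟩

theorem LE'_cons {k : Fin (d' + 1) → ℕ} {a'' : Fin d' → ℕ}
    (h : LE' (Fin.tail k) a'') : LE' k (Fin.cons (k 0) a'') := by
  rcases h with h | h
  · exact Or.inl (by rw [← h, Fin.cons_self_tail])
  · exact Or.inr (lexLT_of_tail h)

variable (s : Fin (d' + 1) → R)

local notation "I₀" => Ideal.span {s 0}
local notation "π₀" => Ideal.Quotient.mk (Ideal.span {s 0})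

/-- Image of the tail of the regular system in the quotient. -/
def sQuot : Fin d' → R ⧸ Ideal.span {s 0} := fun i => π₀ (s i.succ)

theorem pi_prod_succ (a : Fin (d' + 1) → ℕ) :
    π₀ (∏ i : Fin d', s i.succ ^ a i.succ) = ∏ i : Fin d', sQuot s i ^ (Fin.tail a) i := by
  rw [map_prod]
  exact Finset.prod_congr rfl fun i _ => by rw [map_pow]; rfl

theorem hker_aux {k : Fin (d' + 1) → ℕ} {w : R} (hw : π₀ w = 0) :
    s 0 ^ k 0 * w ∈ lexIdeal s k := by
  rw [Ideal.Quotient.eq_zero_iff_mem, Ideal.mem_span_singleton'] at hw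
  obtain ⟨z, rfl⟩ := hw
  have hprod : (∏ i, s i ^ (Fin.cons (k 0 + 1) 0 : Fin (d' + 1) → ℕ) i) = s 0 ^ (k 0 + 1) := by
    rw [Fin.prod_univ_succ]
    simp
  have hmem : s 0 ^ (k 0 + 1) ∈ lexIdeal s k := by
    rw [← hprod]
    refine prod_mem_lexIdeal s (Or.inr ⟨0, ?_, fun j hj => absurd hj (Fin.not_lt_zero j)⟩)
    simp
  have : s 0 ^ k 0 * (z * s 0) = z * s 0 ^ (k 0 + 1) := by ring
  rw [this]
  exact Ideal.mul_mem_left _ z hmem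

theorem decomp {c : R} {k : Fin (d' + 1) → ℕ} (hc : c ∈ lexIdeal s k) :
    ∃ t : R, c = s 0 ^ k 0 * t ∧ π₀ t ∈ lexIdeal (sQuot s) (Fin.tail k) := by
  refine Submodule.span_induction ?_ ?_ ?_ ?_ hc
  · rintro x ⟨a, ha, rfl⟩
    have h0 : k 0 ≤ a 0 := head_le_of_LE' ha
    rcases eq_or_lt_of_le h0 with h0' | h0'
    · refine ⟨∏ i : Fin d', s i.succ ^ a i.succ, ?_, ?_⟩
      · rw [Fin.prod_univ_succ, ← h0']
      · rw [pi_prod_succ]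
        exact prod_mem_lexIdeal _ (LE'_tail ha h0'.symm)
    · refine ⟨s 0 ^ (a 0 - k 0) * ∏ i : Fin d', s i.succ ^ a i.succ, ?_, ?_⟩
      · rw [Fin.prod_univ_succ, ← mul_assoc, ← pow_add]
        have : k 0 + (a 0 - k 0) = a 0 := by omega
        rw [this]
      · have : π₀ (s 0 ^ (a 0 - k 0) * ∏ i : Fin d', s i.succ ^ a i.succ) = 0 := by
          rw [map_mul, map_pow]
          have h1 : π₀ (s 0) = 0 :=
            Ideal.Quotient.eq_zero_iff_mem.2 (Ideal.subset_span rfl)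
          rw [h1, zero_pow (by omega), zero_mul]
        rw [this]; exact zero_mem _
  · exact ⟨0, by ring, by simp⟩
  · rintro x y - - ⟨t1, rfl, h1⟩ ⟨t2, rfl, h2⟩
    exact ⟨t1 + t2, by ring, by rw [map_add]; exact add_mem h1 h2⟩
  · rintro r x - ⟨t, rfl, h⟩
    exact ⟨r * t, by rw [smul_eq_mul]; ring, by rw [map_mul]; exact Ideal.mul_mem_left _ _ h⟩

theorem comp' {k : Fin (d' + 1) → ℕ} {u : R ⧸ Ideal.span {s 0}}
    (hu : u ∈ lexIdeal (sQuot s) (Fin.tail k)) :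
    ∀ t : R, π₀ t = u → s 0 ^ k 0 * t ∈ lexIdeal s k := by
  refine Submodule.span_induction ?_ ?_ ?_ ?_ hu
  · rintro x ⟨a, ha, rfl⟩ t ht
    have hprod : π₀ (∏ i : Fin d', s i.succ ^ a i) = ∏ i : Fin d', sQuot s i ^ a i := by
      rw [map_prod]
      exact Finset.prod_congr rfl fun i _ => by rw [map_pow]; rfl
    have hker : π₀ (t - ∏ i : Fin d', s i.succ ^ a i) = 0 := by
      rw [map_sub, ht, hprod, sub_self]
    have hsplit : s 0 ^ k 0 * t =
        s 0 ^ k 0 * ∏ i : Fin d', s i.succ ^ a i +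
          s 0 ^ k 0 * (t - ∏ i : Fin d', s i.succ ^ a i) := by ring
    rw [hsplit]
    refine add_mem ?_ (hker_aux s hker)
    have hp : s 0 ^ k 0 * ∏ i : Fin d', s i.succ ^ a i =
        ∏ i, s i ^ (Fin.cons (k 0) a : Fin (d' + 1) → ℕ) i := by
      rw [Fin.prod_univ_succ, Fin.cons_zero]
      simp [Fin.cons_succ]
    rw [hp]
    exact prod_mem_lexIdeal s (LE'_cons ha)
  · intro t ht
    exact hker_aux s ht
  · rintro u1 u2 - - h1 h2 t ht
    obtain ⟨t1, ht1⟩ := Ideal.Quotient.mk_surjective u1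
    have ht2 : π₀ (t - t1) = u2 := by rw [map_sub, ht, ht1]; ring
    have : s 0 ^ k 0 * t = s 0 ^ k 0 * t1 + s 0 ^ k 0 * (t - t1) := by ring
    rw [this]
    exact add_mem (h1 t1 ht1) (h2 (t - t1) ht2)
  · rintro r u - h t ht
    obtain ⟨r', hr'⟩ := Ideal.Quotient.mk_surjective r
    obtain ⟨t1, ht1⟩ := Ideal.Quotient.mk_surjective u
    have hker : π₀ (t - r' * t1) = 0 := by
      rw [map_sub, map_mul, ht, hr', ht1, smul_eq_mul, sub_self]
    have : s 0 ^ k 0 * t = r' * (s 0 ^ k 0 * t1) + s 0 ^ k 0 * (t - r' * t1) := by ring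
    rw [this]
    exact add_mem (Ideal.mul_mem_left _ r' (h t1 ht1)) (hker_aux s hker)

theorem cancel_pow (hreg : ∀ x : R, s 0 * x = 0 → x = 0) :
    ∀ (n : ℕ) (x y : R), s 0 ^ n * x = s 0 ^ n * y → x = y := by
  intro n
  induction n with
  | zero => intro x y h; simpa using h
  | succ n ih =>
    intro x y h
    have h' : s 0 ^ n * (s 0 * x) = s 0 ^ n * (s 0 * y) := by
      rw [← mul_assoc, ← mul_assoc, ← pow_succ]; exact h
    have h2 := ih _ _ h'
    have h3 : s 0 * (x - y) = 0 := by rw [mul_sub, h2, sub_self]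
    exact sub_eq_zero.1 (hreg _ h3)

/-- Characterization of `IsVval` over `Fin (d'+1)` in terms of the quotient. -/
theorem char (hreg : ∀ x : R, s 0 * x = 0 → x = 0) {c : R} {k : Fin (d' + 1) → ℕ} :
    IsVval s c k ↔
      ∃ t : R, c = s 0 ^ k 0 * t ∧ t ∉ Ideal.span {s 0} ∧
        IsVval (sQuot s) (π₀ t) (Fin.tail k) := by
  constructor
  · rintro ⟨h1, h2⟩
    obtain ⟨t, rfl, ht⟩ := decomp s h1
    refine ⟨t, rfl, ?_, ht, ?_⟩
    · intro htI
      rw [Ideal.mem_span_singleton'] at htI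
      obtain ⟨z, rfl⟩ := htI
      refine h2 (Fin.cons (k 0 + 1) 0) ⟨0, by simp, fun j hj => absurd hj (Fin.not_lt_zero j)⟩ ?_
      have hprod : (∏ i, s i ^ (Fin.cons (k 0 + 1) 0 : Fin (d' + 1) → ℕ) i) = s 0 ^ (k 0 + 1) := by
        rw [Fin.prod_univ_succ]; simp
      have heq : s 0 ^ k 0 * (z * s 0) =
          z * ∏ i, s i ^ (Fin.cons (k 0 + 1) 0 : Fin (d' + 1) → ℕ) i := by
        rw [hprod]; ring
      show s 0 ^ k 0 * (z * s 0) ∈ lexIdeal s _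
      rw [heq]
      exact Ideal.mul_mem_left _ z (prod_mem_lexIdeal s (Or.inl rfl))
    · intro k'' hk'' hck''
      refine h2 (Fin.cons (k 0) k'') (lexLT_of_tail hk'') ?_
      have := comp' s (k := Fin.cons (k 0) k'') (by rwa [Fin.tail_cons]) t rfl
      rwa [Fin.cons_zero] at this
  · rintro ⟨t, rfl, htI, ht1, ht2⟩
    refine ⟨comp' s ht1 t rfl, ?_⟩
    rintro k' hk' hck'
    rcases lexLT_head_or_tail hk' with h0 | ⟨h0, htl⟩
    · -- lexIdeal s k' ≤ span {s 0 ^ (k 0 + 1)}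
      have hle : lexIdeal s k' ≤ Ideal.span {s 0 ^ (k 0 + 1)} := by
        rw [lexIdeal, Ideal.span_le]
        rintro x ⟨a, ha, rfl⟩
        rw [SetLike.mem_coe, Ideal.mem_span_singleton]
        have h0a : k 0 + 1 ≤ a 0 := le_trans h0 (head_le_of_LE' ha)
        calc s 0 ^ (k 0 + 1) ∣ s 0 ^ a 0 := pow_dvd_pow _ h0a
        _ ∣ ∏ i, s i ^ a i := by rw [Fin.prod_univ_succ]; exact Dvd.intro _ rfl
      have := hle hck'
      rw [Ideal.mem_span_singleton'] at this
      obtain ⟨z, hz⟩ := this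
      have : s 0 ^ k 0 * t = s 0 ^ k 0 * (z * s 0) := by
        rw [← hz]; ring
      have := cancel_pow s hreg _ _ _ this
      exact htI (this ▸ Ideal.mem_span_singleton'.2 ⟨z, rfl⟩)
    · obtain ⟨t', heq, ht'⟩ := decomp s hck'
      rw [← h0] at heq
      have := cancel_pow s hreg _ _ _ heq
      exact ht2 (Fin.tail k') htl (this ▸ ht')

end Quot

end LexAux

namespace LexAux

section Transport

variable {R : Type*} [CommRing R] [IsLocalRing R] {d' : ℕ} (s : Fin (d' + 1) → R)
  (hs : IsRegularSystem s)

local notation "π₀" => Ideal.Quotient.mk (Ideal.span {s 0})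

theorem s_zero_regular (hs : IsRegularSystem s) : ∀ x : R, s 0 * x = 0 → x = 0 := by
  intro x hx
  have hbot : Ideal.span {y : R | ∃ j : Fin (d' + 1), j < 0 ∧ y = s j} = ⊥ := by
    rw [Ideal.span_eq_bot]
    rintro y ⟨j, hj, -⟩
    exact absurd hj (Fin.not_lt_zero j)
  have := hs.2 0 x (by rw [hx]; exact zero_mem _)
  rw [hbot] at this
  simpa using this

theorem span_ne_top (hs : IsRegularSystem s) : Ideal.span {s 0} ≠ ⊤ := by
  intro h
  have h1 : Ideal.span {s 0} ≤ IsLocalRing.maximalIdeal R := by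
    rw [Ideal.span_le, Set.singleton_subset_iff, ← hs.1]
    exact Ideal.subset_span (Set.mem_range_self 0)
  rw [h] at h1
  exact (IsLocalRing.maximalIdeal.isMaximal R).ne_top (top_le_iff.1 h1)

theorem quot_nontrivial (hs : IsRegularSystem s) : Nontrivial (R ⧸ Ideal.span {s 0}) :=
  Ideal.Quotient.nontrivial_iff.mpr (span_ne_top s hs)

theorem quot_local (hs : IsRegularSystem s) : IsLocalRing (R ⧸ Ideal.span {s 0}) := by
  haveI := quot_nontrivial s hs
  exact IsLocalRing.of_surjective' (Ideal.Quotient.mk _) Ideal.Quotient.mk_surjective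

theorem quot_regularSystem (hs : IsRegularSystem s) :
    letI := quot_local s hs
    IsRegularSystem (sQuot s) := by
  letI := quot_local s hs
  constructor
  · -- span (range sQuot) = maximalIdeal Q
    have hsurj : Function.Surjective (π₀) := Ideal.Quotient.mk_surjective
    haveI hmax : (IsLocalRing.maximalIdeal (R ⧸ Ideal.span {s 0})).IsMaximal :=
      IsLocalRing.maximalIdeal.isMaximal _
    have h1 : Ideal.comap (π₀) (IsLocalRing.maximalIdeal (R ⧸ Ideal.span {s 0})) =
        IsLocalRing.maximalIdeal R :=
      IsLocalRing.eq_maximalIdeal (Ideal.comap_isMaximal_of_surjective _ hsurj)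
    have h2 : IsLocalRing.maximalIdeal (R ⧸ Ideal.span {s 0}) =
        Ideal.map (π₀) (IsLocalRing.maximalIdeal R) := by
      rw [← h1, Ideal.map_comap_of_surjective _ hsurj]
    rw [h2, ← hs.1, Ideal.map_span]
    apply le_antisymm
    · rw [Ideal.span_le]
      rintro y ⟨j, rfl⟩
      refine Ideal.subset_span ⟨s j.succ, Set.mem_range_self _, rfl⟩
    · rw [Ideal.span_le]
      rintro y ⟨x, ⟨i, rfl⟩, rfl⟩
      rcases Fin.eq_zero_or_eq_succ i with rfl | ⟨j, rfl⟩
      · have : π₀ (s 0) = 0 := Ideal.Quotient.eq_zero_iff_mem.2 (Ideal.subset_span rfl)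
        rw [this]; exact zero_mem _
      · exact Ideal.subset_span ⟨j, rfl⟩
  · intro i xq hmem
    obtain ⟨x, rfl⟩ := Ideal.Quotient.mk_surjective xq
    set T : Ideal R := Ideal.span {y : R | ∃ j : Fin (d' + 1), j < i.succ ∧ y = s j} with hT
    have hTmap : Ideal.span {y : R ⧸ Ideal.span {s 0} | ∃ j : Fin d', j < i ∧ y = sQuot s j} =
        Ideal.map (π₀) T := by
      rw [hT, Ideal.map_span]
      apply le_antisymm
      · rw [Ideal.span_le]
        rintro y ⟨j, hj, rfl⟩
        exact Ideal.subset_span ⟨s j.succ, ⟨j.succ, Fin.succ_lt_succ_iff.2 hj, rfl⟩, rfl⟩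
      · rw [Ideal.span_le]
        rintro y ⟨x', ⟨j, hj, rfl⟩, rfl⟩
        rcases Fin.eq_zero_or_eq_succ j with rfl | ⟨j', rfl⟩
        · have : π₀ (s 0) = 0 := Ideal.Quotient.eq_zero_iff_mem.2 (Ideal.subset_span rfl)
          rw [this]; exact zero_mem _
        · exact Ideal.subset_span ⟨j', Fin.succ_lt_succ_iff.1 hj, rfl⟩
    have hIT : Ideal.span {s 0} ≤ T := by
      rw [Ideal.span_le, Set.singleton_subset_iff]
      exact Ideal.subset_span ⟨0, i.succ_pos, rfl⟩
    have hmem' : s i.succ * x ∈ T := by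
      rw [hTmap] at hmem
      have : π₀ (s i.succ * x) ∈ Ideal.map (π₀) T := by
        rw [map_mul]; exact hmem
      obtain ⟨x', hx', hxx'⟩ := (Ideal.mem_map_iff_of_surjective _ Ideal.Quotient.mk_surjective).1 this
      have : s i.succ * x - x' ∈ Ideal.span {s 0} := by
        rw [← Ideal.mk_ker (I := Ideal.span {s 0}), RingHom.mem_ker, map_sub, hxx', sub_self]
      have := hIT this
      have heq : s i.succ * x = x' + (s i.succ * x - x') := by ring
      rw [heq]
      exact add_mem hx' this
    have := hs.2 i.succ x hmem'
    rw [hTmap]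
    exact Ideal.mem_map_of_mem _ this

end Transport

universe u

theorem vval_trivial_of_d0 {R : Type u} [CommRing R] (s : Fin 0 → R) (c : R) (k : Fin 0 → ℕ) :
    IsVval s c k := by
  constructor
  · have h1 : (1 : R) ∈ lexIdeal s k := by
      refine Ideal.subset_span ⟨k, Or.inl rfl, ?_⟩
      simp
    simpa [Vge] using Ideal.mul_mem_left _ c h1
  · rintro k' ⟨i, -, -⟩
    exact i.elim0

theorem vval_mul (d : ℕ) : ∀ (R : Type u) [CommRing R] [IsLocalRing R] (s : Fin d → R),
    IsRegularSystem s → ∀ (a b : R) (ka kb : Fin d → ℕ),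
    IsVval s a ka → IsVval s b kb → IsVval s (a * b) (ka + kb) := by
  induction d with
  | zero =>
    intro R _ _ s _ a b ka kb _ _
    exact vval_trivial_of_d0 s _ _
  | succ d' ih =>
    intro R _ _ s hs a b ka kb ha hb
    have hreg := s_zero_regular s hs
    haveI hloc := quot_local s hs
    have hsq := quot_regularSystem s hs
    obtain ⟨ta, rfl, htaI, hta⟩ := (char s hreg).1 ha
    obtain ⟨tb, rfl, htbI, htb⟩ := (char s hreg).1 hb
    have hmul : IsVval (sQuot s) (Ideal.Quotient.mk _ (ta * tb))
        (Fin.tail ka + Fin.tail kb) := by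
      rw [map_mul]
      exact ih _ (sQuot s) hsq _ _ _ _ hta htb
    have htail : Fin.tail (ka + kb) = Fin.tail ka + Fin.tail kb := rfl
    have htI : ta * tb ∉ Ideal.span {s 0} := by
      rcases Nat.eq_zero_or_pos d' with rfl | hd'
      · -- d = 1 : use units
        have hI : Ideal.span {s 0} = IsLocalRing.maximalIdeal R := by
          rw [← hs.1]
          congr 1
          apply le_antisymm
          · exact Set.singleton_subset_iff.2 (Set.mem_range_self 0)
          · rintro y ⟨i, rfl⟩
            rw [Fin.eq_zero i]
            exact rfl
        have hu : ∀ t : R, t ∉ Ideal.span {s 0} → IsUnit t := by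
          intro t ht
          by_contra hnu
          exact ht (hI ▸ (IsLocalRing.mem_maximalIdeal t).2 (mem_nonunits_iff.2 hnu))
        intro hmem
        rw [hI] at hmem
        exact mem_nonunits_iff.1 ((IsLocalRing.mem_maximalIdeal _).1 hmem)
          ((hu ta htaI).mul (hu tb htbI))
      · intro hmem
        have : Ideal.Quotient.mk (Ideal.span {s 0}) (ta * tb) = 0 :=
          Ideal.Quotient.eq_zero_iff_mem.2 hmem
        rw [this] at hmul
        exact not_isVval_zero (sQuot s) hd' _ hmul
    refine (char s hreg).2 ⟨ta * tb, ?_, htI, ?_⟩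
    · rw [Pi.add_apply, pow_add]; ring
    · rw [htail]; exact hmul

end LexAux

namespace LexAux

theorem mole_zero_min {l : ℕ} {mole : (Fin l →₀ ℕ) → (Fin l →₀ ℕ) → Prop}
    (hmo : IsMonomialOrder mole) : ∀ m, mole 0 m := by
  have htot : ∀ a b, mole a b ∨ mole b a := hmo.1.toTotal.total
  have hanti : ∀ {a b}, mole a b → mole b a → a = b := fun {a b} =>
    hmo.1.toIsPartialOrder.toAntisymm.antisymm a b
  have hrefl : ∀ a, mole a a := fun a => hmo.1.toIsPartialOrder.toIsPreorder.toRefl.refl a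
  set m₀ := hmo.2.2.min Set.univ ⟨0, trivial⟩ with hm₀
  have hmin : ∀ x, mole m₀ x := by
    intro x
    rcases htot m₀ x with h | h
    · exact h
    · by_cases hx : x = m₀
      · rw [hx]; exact hrefl m₀
      · exact absurd ⟨h, hx⟩ (hmo.2.2.not_lt_min Set.univ (x := x) trivial)
  have h1 : mole (m₀ + m₀) m₀ := by
    have := hmo.2.1 m₀ 0 m₀ (hmin 0)
    rwa [zero_add] at this
  have h2 : m₀ = 0 := add_eq_right.1 (hanti h1 (hmin (m₀ + m₀)))
  intro m
  rw [← h2]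
  exact hmin m

end LexAux


open LexAux

/-- Let `R` be a complete regular local ring with fixed regular system of
parameters `s₁,…,s_d` and `R⟨X₁,…,X_l⟩` the `𝔪_R`-adic completion of `R[X]`.  Then the
leading-term map `LT_R(f) = s^{v_R(f)} X^{deg_R(f)}` is multiplicative:
`LT_R(f·g) = LT_R(f)·LT_R(g)`, i.e. if `LT_R(f) = s^{k_f}X^{m_f}` and
`LT_R(g) = s^{k_g}X^{m_g}` then `LT_R(f·g) = s^{k_f+k_g}X^{m_f+m_g}`. -/
theorem leading_term_multiplicative
    {R : Type*} [CommRing R] [IsNoetherianRing R] [IsLocalRing R]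
    [IsAdicComplete (IsLocalRing.maximalIdeal R) R]
    {d l : ℕ} (s : Fin d → R) (hs : IsRegularSystem s)
    (mole : (Fin l →₀ ℕ) → (Fin l →₀ ℕ) → Prop) (hmo : IsMonomialOrder mole)
    (f g : MvPowerSeries (Fin l) R)
    (hf : Decay (IsLocalRing.maximalIdeal R) f) (hg : Decay (IsLocalRing.maximalIdeal R) g)
    (kf kg : Fin d → ℕ) (mf mg : Fin l →₀ ℕ)
    (hLTf : IsLT s mole f kf mf) (hLTg : IsLT s mole g kg mg) :
    IsLT s mole (f * g) (kf + kg) (mf + mg) := by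
  classical
  have htot : ∀ a b, mole a b ∨ mole b a := hmo.1.toTotal.total
  have hanti : ∀ {a b}, mole a b → mole b a → a = b := fun {a b} =>
    hmo.1.toIsPartialOrder.toAntisymm.antisymm a b
  have hrefl : ∀ a, mole a a := fun a => hmo.1.toIsPartialOrder.toIsPreorder.toRefl.refl a
  have htrans : ∀ {a b c}, mole a b → mole b c → mole a c := fun {a b c} =>
    hmo.1.toIsPartialOrder.toIsPreorder.toIsTrans.trans a b c
  -- from non-strictness get `mole`
  have hns : ∀ {m₁ m₀ : Fin l →₀ ℕ}, ¬(mole m₁ m₀ ∧ m₁ ≠ m₀) → mole m₀ m₁ := by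
    intro m₁ m₀ h
    rcases htot m₀ m₁ with h' | h'
    · exact h'
    · by_cases he : m₁ = m₀
      · rw [he]; exact hrefl m₀
      · exact absurd ⟨h', he⟩ h
  -- key: `mole mf m₁ → mole mg m₂ → mole (mf + mg) (m₁ + m₂)`
  have hkey : ∀ {m₁ m₂ : Fin l →₀ ℕ}, mole mf m₁ → mole mg m₂ →
      mole (mf + mg) (m₁ + m₂) := by
    intro m₁ m₂ h1 h2
    have ha : mole (mf + m₂) (m₁ + m₂) := hmo.2.1 _ _ _ h1
    have hb : mole (mf + mg) (mf + m₂) := by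
      have := hmo.2.1 _ _ mf h2
      rwa [add_comm mg mf, add_comm m₂ mf] at this
    exact htrans hb ha
  rcases Nat.eq_zero_or_pos d with rfl | hd
  · -- degenerate case `d = 0`
    have htriv : ∀ (c : R) (k : Fin 0 → ℕ), IsVval s c k := vval_trivial_of_d0 s
    have hzm := mole_zero_min hmo
    have hmf : mf = 0 := by
      by_contra h
      exact hLTf.2.2 0 (fun h0 => h h0.symm) (hzm mf) (htriv _ _)
    have hmg : mg = 0 := by
      by_contra h
      exact hLTg.2.2 0 (fun h0 => h h0.symm) (hzm mg) (htriv _ _)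
    refine ⟨fun m' => (htriv _ _).1, htriv _ _, ?_⟩
    intro m' hne hm' _
    rw [hmf, hmg, add_zero] at hne hm'
    exact hne (hanti hm' (hzm m'))
  · -- main case `d ≥ 1`
    refine ⟨?_, ?_, ?_⟩
    · -- all coefficients are `⪰ kf + kg`
      intro m'
      show MvPowerSeries.coeff m' (f * g) ∈ lexIdeal s (kf + kg)
      rw [MvPowerSeries.coeff_mul]
      exact Ideal.sum_mem _ fun p _ => mul_mem_lexIdeal s (hLTf.1 p.1) (hLTg.1 p.2)
    · -- the coefficient at `mf + mg` has value exactly `kf + kg`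
      have hmem : (mf, mg) ∈ Finset.HasAntidiagonal.antidiagonal (mf + mg) := by
        rw [Finset.HasAntidiagonal.mem_antidiagonal]
      rw [MvPowerSeries.coeff_mul, ← Finset.sum_erase_add _ _ hmem, add_comm]
      refine isVval_add s hd (vval_mul d R s hs _ _ _ _ hLTf.2.1 hLTg.2.1) ?_
      refine Ideal.sum_mem _ ?_
      rintro ⟨m₁, m₂⟩ hp
      simp only [Finset.mem_erase, Finset.HasAntidiagonal.mem_antidiagonal] at hp
      obtain ⟨hpne, hpsum⟩ := hp
      by_cases h1 : mole m₁ mf ∧ m₁ ≠ mf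
      · have hS : MvPowerSeries.coeff m₁ f ∈ SIdeal s kf := by
          by_contra hS
          exact hLTf.2.2 m₁ h1.2 h1.1 ((isVval_iff s hd).2 ⟨hLTf.1 m₁, hS⟩)
        exact mul_mem_SIdeal s hS (hLTg.1 m₂)
      · by_cases h2 : mole m₂ mg ∧ m₂ ≠ mg
        · have hS : MvPowerSeries.coeff m₂ g ∈ SIdeal s kg := by
            by_contra hS
            exact hLTg.2.2 m₂ h2.2 h2.1 ((isVval_iff s hd).2 ⟨hLTg.1 m₂, hS⟩)
          have := mul_mem_SIdeal s hS (hLTf.1 m₁)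
          rw [mul_comm, add_comm kg kf] at this
          exact this
        · exfalso
          have hm1 : mole mf m₁ := hns h1
          have hm2 : mole mg m₂ := hns h2
          -- then `m₁ = mf` and `m₂ = mg`, contradicting `hpne`
          have ha : mole (mf + m₂) (m₁ + m₂) := hmo.2.1 _ _ _ hm1
          have hb : mole (mf + mg) (mf + m₂) := by
            have := hmo.2.1 _ _ mf hm2
            rwa [add_comm mg mf, add_comm m₂ mf] at this
          rw [hpsum] at ha
          have hc : mf + m₂ = mf + mg := hanti ha hb
          have h2' : m₂ = mg := by
            have := hc
            rw [add_comm mf m₂, add_comm mf mg] at this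
            exact add_right_cancel this
          have h1' : m₁ = mf := by
            rw [h2'] at hpsum
            exact add_right_cancel hpsum
          exact hpne (by rw [h1', h2'])
    · -- minimality of `mf + mg`
      intro m' hne hm' hVv
      rw [MvPowerSeries.coeff_mul] at hVv
      have hnotS := ((isVval_iff s hd).1 hVv).2
      apply hnotS
      refine Ideal.sum_mem _ ?_
      rintro ⟨m₁, m₂⟩ hp
      rw [Finset.HasAntidiagonal.mem_antidiagonal] at hp
      by_cases h1 : mole m₁ mf ∧ m₁ ≠ mf
      · have hS : MvPowerSeries.coeff m₁ f ∈ SIdeal s kf := by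
          by_contra hS
          exact hLTf.2.2 m₁ h1.2 h1.1 ((isVval_iff s hd).2 ⟨hLTf.1 m₁, hS⟩)
        exact mul_mem_SIdeal s hS (hLTg.1 m₂)
      · by_cases h2 : mole m₂ mg ∧ m₂ ≠ mg
        · have hS : MvPowerSeries.coeff m₂ g ∈ SIdeal s kg := by
            by_contra hS
            exact hLTg.2.2 m₂ h2.2 h2.1 ((isVval_iff s hd).2 ⟨hLTg.1 m₂, hS⟩)
          have := mul_mem_SIdeal s hS (hLTf.1 m₁)
          rw [mul_comm, add_comm kg kf] at this
          exact this
        · exfalso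
          have hMle : mole (mf + mg) (m₁ + m₂) := hkey (hns h1) (hns h2)
          rw [hp] at hMle
          exact hne (hanti hm' hMle)
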